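/- Let (β,α) ∈ Δ with kneading invariants k₊ and k₋, and for i ≥ 1 write a_i and b_i for the i-th entries of k₊ and k₋. If (T⁺_{β,α})^{m−1}(0) = (T⁻_{β,α})^{m−1}(1) for some integer m ≥ 2, then β^{m−1} − β^{m−2} + Σ_{i=3}^{m} (a_i − b_i)·β^{m−i} = 0. In particular, β is an algebraic integer (a root of a monic integer polynomial all of whose coefficients lie in {−1,0,1}). -/

import Mathlib

noncomputable section

/-- The upper intermediate β-transformation `T⁺_{β,α}` on `[0,1]`. -/
def Tpos (β α : ℝ) (x : ℝ) : ℝ :=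
  if x = (1 - α) / β then 0 else Int.fract (β * x + α)

/-- The lower intermediate β-transformation `T⁻_{β,α}` on `[0,1]`. -/
def Tneg (β α : ℝ) (x : ℝ) : ℝ :=
  if x = (1 - α) / β then 1 else Int.fract (β * x + α)

/-- The itinerary `τ⁺_{β,α}(x)`: index `n` (from 0) is the `(n+1)`-st entry;
entry is `false` (i.e. 0) iff the `n`-th iterate is `< c`. -/
def tauPos (β α x : ℝ) : ℕ → Bool :=
  fun n => if (Tpos β α)^[n] x < (1 - α) / β then false else true

/-- The itinerary `τ⁻_{β,α}(x)`: entry is `false` (i.e. 0) iff the iterate is `≤ c`. -/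
def tauNeg (β α x : ℝ) : ℕ → Bool :=
  fun n => if (Tneg β α)^[n] x ≤ (1 - α) / β then false else true

/-- The kneading invariant `k₊` of `(β,α)`. -/
def kPlus (β α : ℝ) : ℕ → Bool := tauPos β α ((1 - α) / β)

/-- The kneading invariant `k₋` of `(β,α)`. -/
def kMinus (β α : ℝ) : ℕ → Bool := tauNeg β α ((1 - α) / β)

/-- The kneading space `Ω_{β,α}`. -/
def OmegaSet (β α : ℝ) : Set (ℕ → Bool) :=
  (tauPos β α '' Set.Icc 0 1) ∪ (tauNeg β α '' Set.Icc 0 1)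

/-- `Ω` is a subshift of finite type: there is a finite set of finite forbidden words
such that `Ω` is exactly the set of sequences avoiding them. -/
def IsSFT (Ω : Set (ℕ → Bool)) : Prop :=
  ∃ F : Finset (List Bool),
    Ω = {ω | ∀ m n : ℕ, List.ofFn (fun i : Fin n => ω (m + i)) ∉ F}

/-- `T_{β,α}` has matching. -/
def HasMatching (β α : ℝ) : Prop :=
  ∃ n : ℕ, (Tpos β α)^[n] 0 = (Tneg β α)^[n] 1

/-- The matching time: the smallest `n` with `(T⁺)ⁿ(0) = (T⁻)ⁿ(1)`. -/
def matchingTime (β α : ℝ) : ℕ :=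
  sInf {n : ℕ | (Tpos β α)^[n] 0 = (Tneg β α)^[n] 1}

/-- `T_{β,α}` and `T_{β,α'}` have the same matching: both have matching, with the same
matching time `n`, and their kneading invariants agree in the first `n+1` entries. -/
def SameMatching (β α α' : ℝ) : Prop :=
  HasMatching β α ∧ HasMatching β α' ∧ matchingTime β α = matchingTime β α' ∧
    ∀ i ≤ matchingTime β α, kPlus β α i = kPlus β α' i ∧ kMinus β α i = kMinus β α' i

/-- The matching set `I(β,α)` (a subset of `(0, 2-β)`). -/
def matchInterval (β α : ℝ) : Set ℝ :=
  {α' | α' ∈ Set.Ioo (0 : ℝ) (2 - β) ∧ SameMatching β α α'}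

/-- The parameter region `Δ`. -/
def DeltaSet : Set (ℝ × ℝ) :=
  {p | p.1 ∈ Set.Ioo (1 : ℝ) 2 ∧ p.2 ∈ Set.Ioo (0 : ℝ) (2 - p.1)}

/-- A sequence in `{0,1}^ℕ` is periodic. -/
def IsPeriodicSeq (ω : ℕ → Bool) : Prop :=
  ∃ p : ℕ, 1 ≤ p ∧ ∀ n, ω (n + p) = ω n

/-- A sequence in `{0,1}^ℕ` is eventually periodic. -/
def IsEvPeriodicSeq (ω : ℕ → Bool) : Prop :=
  ∃ k : ℕ, IsPeriodicSeq (fun n => ω (n + k))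

/-- Strict lexicographic order on `{0,1}^ℕ`: at the first index where they differ,
`ω` has entry 0 and `ν` has entry 1. -/
def lexLt (ω ν : ℕ → Bool) : Prop :=
  ∃ n : ℕ, (∀ m < n, ω m = ν m) ∧ ω n = false ∧ ν n = true

/-!
On `[0,1]` both maps act as `x ↦ βx + α - d`, the digit `d ∈ {0,1}` being the corresponding entry
of the itinerary (also at the critical point `c = (1 - α) / β`), and `T⁺c = 0`, `T⁻c = 1`.
So the difference `Dₙ = (T⁻)ⁿc - (T⁺)ⁿc` satisfies `Dₙ₊₁ = β Dₙ + (aₙ₊₁ - bₙ₊₁)` with `D₀ = 0`,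
whence `Dₘ = ∑_{i=1}^m (aᵢ - bᵢ) β^{m-i}`. Matching at time `m - 1` means exactly `Dₘ = 0`, and
`a₁ = 1, b₁ = 0, a₂ = 0, b₂ = 1` produce the leading terms `β^{m-1} - β^{m-2}`.
-/

open Finset Polynomial

lemma Int.fract_eq_sub_ite_of_lt_two {y : ℝ} (h0 : 0 ≤ y) (h2 : y < 2) :
    Int.fract y = y - if y < 1 then 0 else 1 := by
  split_ifs with h1
  · simpa using Int.fract_eq_self.2 ⟨h0, h1⟩
  · exact Int.fract_eq_iff.2 ⟨by linarith, by linarith, 1, by simp⟩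

section IntermediateBetaTransformation

variable {β α : ℝ}

lemma Tpos_self (β α : ℝ) : Tpos β α ((1 - α) / β) = 0 := if_pos rfl

lemma Tneg_self (β α : ℝ) : Tneg β α ((1 - α) / β) = 1 := if_pos rfl

lemma iterate_succ_Tpos_crit (β α : ℝ) (n : ℕ) :
    (Tpos β α)^[n + 1] ((1 - α) / β) = (Tpos β α)^[n] 0 := by
  rw [Function.iterate_succ_apply, Tpos_self]

lemma iterate_succ_Tneg_crit (β α : ℝ) (n : ℕ) :
    (Tneg β α)^[n + 1] ((1 - α) / β) = (Tneg β α)^[n] 1 := by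
  rw [Function.iterate_succ_apply, Tneg_self]

lemma Tpos_mem_Ico (β α x : ℝ) : Tpos β α x ∈ Set.Ico 0 1 := by
  unfold Tpos
  split_ifs
  · exact ⟨le_rfl, one_pos⟩
  · exact ⟨Int.fract_nonneg _, Int.fract_lt_one _⟩

lemma Tneg_mem_Icc (β α x : ℝ) : Tneg β α x ∈ Set.Icc 0 1 := by
  unfold Tneg
  split_ifs
  · exact ⟨zero_le_one, le_rfl⟩
  · exact ⟨Int.fract_nonneg _, (Int.fract_lt_one _).le⟩

lemma mul_add_lt_one_iff_lt_div (hβ : 0 < β) (x : ℝ) : β * x + α < 1 ↔ x < (1 - α) / β := by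
  rw [lt_div_iff₀ hβ]
  constructor <;> intro h <;> linarith

lemma Tpos_eq_of_mem_Ico (hβ : 0 < β) (hα : 0 ≤ α) (hβα : β + α ≤ 2) {x : ℝ}
    (hx : x ∈ Set.Ico 0 1) :
    Tpos β α x = β * x + α - if x < (1 - α) / β then 0 else 1 := by
  by_cases hxc : x = (1 - α) / β
  · rw [hxc, Tpos_self, if_neg (lt_irrefl _), mul_div_cancel₀ _ hβ.ne']
    ring
  · rw [Tpos, if_neg hxc,
      Int.fract_eq_sub_ite_of_lt_two (by nlinarith [hx.1]) (by nlinarith [hx.2])]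
    simp only [mul_add_lt_one_iff_lt_div hβ]

lemma Tneg_eq_of_mem_Icc (hβ : 0 < β) (hα : 0 ≤ α) (hβα : β + α < 2) {x : ℝ}
    (hx : x ∈ Set.Icc 0 1) :
    Tneg β α x = β * x + α - if x ≤ (1 - α) / β then 0 else 1 := by
  by_cases hxc : x = (1 - α) / β
  · rw [hxc, Tneg_self, if_pos le_rfl, mul_div_cancel₀ _ hβ.ne']
    ring
  · rw [Tneg, if_neg hxc,
      Int.fract_eq_sub_ite_of_lt_two (by nlinarith [hx.1]) (by nlinarith [hx.2])]
    simp only [mul_add_lt_one_iff_lt_div hβ, le_iff_lt_or_eq, hxc, or_false]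

lemma iterate_Tpos_mem_Ico {x : ℝ} (hx : x ∈ Set.Ico 0 1) :
    ∀ n, (Tpos β α)^[n] x ∈ Set.Ico 0 1
  | 0 => hx
  | n + 1 => by
    rw [Function.iterate_succ_apply']
    exact Tpos_mem_Ico β α _

lemma iterate_Tneg_mem_Icc {x : ℝ} (hx : x ∈ Set.Icc 0 1) :
    ∀ n, (Tneg β α)^[n] x ∈ Set.Icc 0 1
  | 0 => hx
  | n + 1 => by
    rw [Function.iterate_succ_apply']
    exact Tneg_mem_Icc β α _

lemma iterate_succ_Tpos (hβ : 0 < β) (hα : 0 ≤ α) (hβα : β + α ≤ 2) {x : ℝ}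
    (hx : x ∈ Set.Ico 0 1) (n : ℕ) :
    (Tpos β α)^[n + 1] x =
      β * (Tpos β α)^[n] x + α - if tauPos β α x n then 1 else 0 := by
  rw [Function.iterate_succ_apply', Tpos_eq_of_mem_Ico hβ hα hβα (iterate_Tpos_mem_Ico hx n),
    tauPos]
  split_ifs <;> simp_all

lemma iterate_succ_Tneg (hβ : 0 < β) (hα : 0 ≤ α) (hβα : β + α < 2) {x : ℝ}
    (hx : x ∈ Set.Icc 0 1) (n : ℕ) :
    (Tneg β α)^[n + 1] x =
      β * (Tneg β α)^[n] x + α - if tauNeg β α x n then 1 else 0 := by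
  rw [Function.iterate_succ_apply', Tneg_eq_of_mem_Icc hβ hα hβα (iterate_Tneg_mem_Icc hx n),
    tauNeg]
  split_ifs <;> simp_all

end IntermediateBetaTransformation

lemma eq_pow_mul_add_sum_of_succ_eq {R : Type*} [CommSemiring R] (β : R) {d e : ℕ → R}
    (hd : ∀ n, d (n + 1) = β * d n + e n) (n : ℕ) :
    d (n + 1) = β ^ (n + 1) * d 0 + ∑ j ∈ range (n + 1), e j * β ^ (n - j) := by
  induction n with
  | zero => simp [hd]
  | succ n ih =>
    have hpow : ∀ j ∈ range (n + 1), β * (e j * β ^ (n - j)) = e j * β ^ (n + 1 - j) :=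
      fun j hj => by rw [Nat.sub_add_comm (mem_range_succ_iff.1 hj), pow_succ]; ring
    rw [hd, ih, sum_range_succ _ (n + 1), mul_add, mul_sum, sum_congr rfl hpow, Nat.sub_self,
      pow_zero, mul_one]
    ring

lemma sum_Icc_three_eq_sum_range {R : Type*} [CommSemiring R] (g : ℕ → R) (x : R) (n : ℕ) :
    ∑ i ∈ Icc 3 (n + 2), g (i - 1) * x ^ (n + 2 - i) =
      ∑ j ∈ range n, g (j + 1 + 1) * x ^ (n + 1 - (j + 1 + 1)) := by
  rw [← Ico_add_one_right_eq_Icc, sum_Ico_eq_sum_range, show n + 2 + 1 - 3 = n by omega]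
  refine sum_congr rfl fun j _ => ?_
  rw [show 3 + j - 1 = j + 1 + 1 by omega, show n + 2 - (3 + j) = n + 1 - (j + 1 + 1) by omega]

section Kneading

variable {β α : ℝ}

lemma crit_mem_Ioo (hβ : 1 < β) (hα : α ∈ Set.Ioo 0 (2 - β)) :
    (1 - α) / β ∈ Set.Ioo 0 1 :=
  ⟨div_pos (by linarith [hα.2]) (by linarith), (div_lt_one (by linarith)).2 (by linarith [hα.1])⟩

lemma kPlus_zero (β α : ℝ) : kPlus β α 0 = true := by simp [kPlus, tauPos]

lemma kMinus_zero (β α : ℝ) : kMinus β α 0 = false := by simp [kMinus, tauNeg]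

lemma kPlus_one (hc : 0 < (1 - α) / β) : kPlus β α 1 = false := by
  simp [kPlus, tauPos, Tpos_self, hc]

lemma kMinus_one (hc : (1 - α) / β < 1) : kMinus β α 1 = true := by
  simp [kMinus, tauNeg, Tneg_self, hc]

lemma iterate_Tneg_sub_iterate_Tpos_crit (hβ : 1 < β) (hα : α ∈ Set.Ioo 0 (2 - β)) (n : ℕ) :
    (Tneg β α)^[n + 1] ((1 - α) / β) - (Tpos β α)^[n + 1] ((1 - α) / β) =
      ∑ j ∈ range (n + 1),
        ((if kPlus β α j then (1 : ℝ) else 0) - if kMinus β α j then 1 else 0) * β ^ (n - j) := by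
  have hc := Set.Ioo_subset_Ico_self (crit_mem_Ioo hβ hα)
  have hβα : β + α < 2 := by linarith [hα.2]
  have h := eq_pow_mul_add_sum_of_succ_eq β
    (d := fun k => (Tneg β α)^[k] ((1 - α) / β) - (Tpos β α)^[k] ((1 - α) / β))
    (e := fun j => (if kPlus β α j then (1 : ℝ) else 0) - if kMinus β α j then 1 else 0)
    (fun k => by
      rw [iterate_succ_Tneg (by linarith) hα.1.le hβα (Set.Ico_subset_Icc_self hc),
        iterate_succ_Tpos (by linarith) hα.1.le hβα.le hc, kPlus, kMinus]
      ring) n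
  simpa only [Function.iterate_zero, id, sub_self, mul_zero, zero_add] using h

end Kneading

lemma exists_monic_of_sum_eq_zero {A : Type*} [CommRing A] {x : A} {e : ℕ → ℤ} {n : ℕ}
    (he : ∀ j, e j = -1 ∨ e j = 0 ∨ e j = 1) (he0 : e 0 = 1)
    (hx : ∑ j ∈ range (n + 1), (e j : A) * x ^ (n - j) = 0) :
    ∃ p : ℤ[X], p.Monic ∧ (∀ i, p.coeff i = -1 ∨ p.coeff i = 0 ∨ p.coeff i = 1) ∧
      aeval x p = 0 := by
  set p : ℤ[X] := ∑ k ∈ range (n + 1), C (e (n - k)) * X ^ k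
  have hcoeff : ∀ i, p.coeff i = if i ≤ n then e (n - i) else 0 := by
    intro i
    simp [p, finsetSum_coeff]
  refine ⟨p, monic_of_natDegree_le_of_coeff_eq_one n ?_ ?_, fun i => ?_, ?_⟩
  · exact natDegree_le_iff_coeff_eq_zero.2 fun i hi => by simp [hcoeff, hi.not_ge]
  · simp [hcoeff, he0]
  · rw [hcoeff]
    split_ifs
    exacts [he _, Or.inr (Or.inl rfl)]
  · rw [← hx, ← sum_range_reflect]
    simp only [p, map_sum, map_mul, map_intCast, map_pow, aeval_X, eq_intCast]
    refine sum_congr rfl fun j hj => ?_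
    rw [Nat.add_sub_cancel, Nat.sub_sub_self (mem_range_succ_iff.1 hj)]

theorem matching_polynomial_vanishes (β α : ℝ)
    (hβ : β ∈ Set.Ioo (1 : ℝ) 2) (hα : α ∈ Set.Ioo (0 : ℝ) (2 - β))
    (m : ℕ) (hm : 2 ≤ m)
    (hmatch : (Tpos β α)^[m - 1] 0 = (Tneg β α)^[m - 1] 1) :
    β ^ (m - 1) - β ^ (m - 2) +
        (∑ i ∈ Finset.Icc 3 m,
          ((if kPlus β α (i - 1) then (1 : ℝ) else 0) -
            (if kMinus β α (i - 1) then (1 : ℝ) else 0)) * β ^ (m - i)) = 0 ∧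
    ∃ p : Polynomial ℤ, p.Monic ∧
      (∀ i : ℕ, p.coeff i = -1 ∨ p.coeff i = 0 ∨ p.coeff i = 1) ∧
      Polynomial.aeval β p = 0 := by
  obtain ⟨n, rfl⟩ : ∃ n, m = n + 2 := ⟨m - 2, by omega⟩
  have hc := crit_mem_Ioo hβ.1 hα
  have hzero := iterate_Tneg_sub_iterate_Tpos_crit hβ.1 hα (n + 1)
  rw [show n + 2 - 1 = n + 1 by omega] at hmatch
  rw [iterate_succ_Tpos_crit, iterate_succ_Tneg_crit, ← hmatch, sub_self, eq_comm] at hzero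
  refine ⟨?_, exists_monic_of_sum_eq_zero (n := n + 1)
    (e := fun j => (if kPlus β α j then 1 else 0) - if kMinus β α j then 1 else 0) ?_ ?_ ?_⟩
  · rw [sum_range_succ', sum_range_succ', kPlus_zero, kMinus_zero, kPlus_one hc.1,
      kMinus_one hc.2] at hzero
    rw [sum_Icc_three_eq_sum_range
        (fun k => (if kPlus β α k then (1 : ℝ) else 0) - if kMinus β α k then 1 else 0),
      show n + 2 - 1 = n + 1 by omega, show n + 2 - 2 = n by omega]
    simp only [Bool.false_eq_true, if_true, if_false, Nat.sub_zero, Nat.add_sub_cancel] at hzero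
    linarith
  · intro j
    cases kPlus β α j <;> cases kMinus β α j <;> simp
  · simp [kPlus_zero, kMinus_zero]
  · simpa using hzero
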